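/- arXiv:2303.16713 — 6 statements merged into one kernel-verified Lean document; each statement's English description precedes it below -/
import Mathlib

section
/- Let $(X,d,\mu)$ be a metric measure space in which every nonempty open set has positive measure and every bounded set has finite measure, and suppose $(X,d,\mu)$ satisfies the $\delta$-annular decay property for some $\delta\in(0,1]$ with constant $K\geq 1$. Let $\alpha\colon X\to[0,\delta]$. Then the Hardy–Littlewood maximal operator maps $C^{0,\alpha(\cdot)}(X)$ into $C^{0,\alpha(\cdot)}(X)$, and there exists a constant $C_1>0$ (one may take $C_1=\max\{7,\,1+12K\,2^{\delta}\}$) such that for all $f\in C^{0,\alpha(\cdot)}(X)$, $\|Mf\|_{C^{0,\alpha(\cdot)}(X)}\leq C_1\,\|f\|_{C^{0,\alpha(\cdot)}(X)}$. -/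
open MeasureTheory Metric Set Filter

noncomputable def maxFun {X : Type*} [MetricSpace X] [MeasurableSpace X]
    (μ : Measure X) (f : X → ℝ) (x : X) : ℝ :=
  ⨆ r : {r : ℝ // 0 < r}, ⨍ t in ball x r.1, |f t| ∂μ

noncomputable def holderSemi {X : Type*} [MetricSpace X] (α : X → ℝ) (f : X → ℝ) : ℝ :=
  ⨆ p : {p : X × X // p.1 ≠ p.2}, |f p.1.1 - f p.1.2| / dist p.1.1 p.1.2 ^ α p.1.1

noncomputable def holderNorm {X : Type*} [MetricSpace X] (α : X → ℝ) (f : X → ℝ) : ℝ :=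
  (⨆ x, |f x|) + holderSemi α f

def MemVarHolder {X : Type*} [MetricSpace X] (α : X → ℝ) (f : X → ℝ) : Prop :=
  Continuous f ∧ BddAbove (Set.range fun x => |f x|) ∧
    BddAbove (Set.range fun p : {p : X × X // p.1 ≠ p.2} =>
      |f p.1.1 - f p.1.2| / dist p.1.1 p.1.2 ^ α p.1.1)

/-!
For `u ≠ v` at distance `d`, compare the averages of `|f|` on balls about `u` and `v`, with `H`
the Hölder seminorm of `f`. Below radius `d` both are within `H (2d)^α(u)` of `|f u|`. Above it,
`ball v r ⊆ ball u (r + d)` and the difference lies in the annulus about `u` of radii `r - d` and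
`r + d`, whose relative measure is at most `K (2d / (r + d))^δ` by annular decay; the oscillation
of `|f|` on `ball u (r + d)` is at most `H (3r)^α(u)`, and `(d / r)^δ r^α ≤ d^α` because `α ≤ δ`.
The same dichotomy, with the modulus of continuity of `f` in place of the Hölder bound, gives
continuity of `Mf`.
-/

open scoped ENNReal

section Average

variable {α : Type*} [MeasurableSpace α] {μ : Measure α} {s S : Set α} {g : α → ℝ}

lemma setAverage_le_of_forall_le (hs0 : μ s ≠ 0) (hs : μ s ≠ ∞) (hg : IntegrableOn g s μ)
    {c : ℝ} (hc : ∀ t ∈ s, g t ≤ c) : ⨍ t in s, g t ∂μ ≤ c :=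
  let ⟨t, ht, h⟩ := exists_setAverage_le hs0 hs hg
  h.trans (hc t ht)

lemma le_setAverage_of_forall_le (hs0 : μ s ≠ 0) (hs : μ s ≠ ∞) (hg : IntegrableOn g s μ)
    {c : ℝ} (hc : ∀ t ∈ s, c ≤ g t) : c ≤ ⨍ t in s, g t ∂μ :=
  let ⟨t, ht, h⟩ := exists_le_setAverage hs0 hs hg
  (hc t ht).trans h

/-- `⨍_s g - ⨍_S g = (μ (S \ s) / μ S) (⨍_s g - ⨍_{S \ s} g)`, and both averages on the right lie
in `[m - c, m + c]`. -/
lemma setAverage_le_setAverage_add (hs : MeasurableSet s) (hS : MeasurableSet S) (hsS : s ⊆ S)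
    (hs0 : μ s ≠ 0) (hSfin : μ S ≠ ∞) (hg : IntegrableOn g S μ) {m c κ : ℝ} (hκ : 0 ≤ κ)
    (hgm : ∀ t ∈ S, |g t - m| ≤ c) (hdiff : μ (S \ s) ≤ ENNReal.ofReal κ * μ S) :
    ⨍ t in s, g t ∂μ ≤ ⨍ t in S, g t ∂μ + 2 * κ * c := by
  have hsfin : μ s ≠ ∞ := measure_ne_top_of_subset hsS hSfin
  have hdfin : μ (S \ s) ≠ ∞ := measure_ne_top_of_subset sdiff_subset hSfin
  obtain ⟨t₀, ht₀⟩ := nonempty_of_measure_ne_zero hs0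
  have hc : 0 ≤ c := (abs_nonneg _).trans (hgm t₀ (hsS ht₀))
  set A := ⨍ t in s, g t ∂μ
  set E := ∫ t in S \ s, g t ∂μ
  have hA : A ≤ m + c := setAverage_le_of_forall_le hs0 hsfin (hg.mono_set hsS) fun t ht =>
    by linarith [(abs_le.1 (hgm t (hsS ht))).2]
  have hE : (m - c) * μ.real (S \ s) ≤ E :=
    setIntegral_ge_of_const_le_real (hS.diff hs) hdfin
      (fun t ht => by linarith [(abs_le.1 (hgm t ht.1)).1]) (hg.mono_set sdiff_subset)
  have hsplit : μ.real S = μ.real s + μ.real (S \ s) := by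
    rw [← measureReal_union disjoint_sdiff_right (hS.diff hs) hsfin hdfin, union_sdiff_cancel hsS]
  have hintegral : ∫ t in S, g t ∂μ = μ.real s * A + E := by
    rw [← smul_eq_mul, measure_smul_setAverage _ hsfin,
      ← setIntegral_union disjoint_sdiff_right (hS.diff hs) (hg.mono_set hsS)
        (hg.mono_set sdiff_subset), union_sdiff_cancel hsS]
  have hκS : μ.real (S \ s) ≤ κ * μ.real S := by
    simpa [measureReal_def, ENNReal.toReal_mul, ENNReal.toReal_ofReal hκ] using
      ENNReal.toReal_mono (ENNReal.mul_ne_top ENNReal.ofReal_ne_top hSfin) hdiff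
  have hSpos : 0 < μ.real S :=
    ENNReal.toReal_pos (fun h => hs0 (measure_mono_null hsS h)) hSfin
  have key : μ.real S * A ≤ μ.real s * A + E + μ.real S * (2 * κ * c) := by
    have hSA : μ.real S * A = μ.real s * A + μ.real (S \ s) * A := by rw [hsplit, add_mul]
    linarith [mul_le_mul_of_nonneg_left hA (measureReal_nonneg (s := S \ s) (μ := μ)),
      mul_le_mul_of_nonneg_left hκS hc]
  rw [setAverage_eq, smul_eq_mul, hintegral, ← sub_le_iff_le_add',
    ← mul_le_mul_iff_of_pos_left hSpos]
  field_simp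
  linarith

end Average

lemma rpow_div_mul_rpow_le {d r a δ : ℝ} (hd : 0 < d) (hdr : d ≤ r) (haδ : a ≤ δ) :
    (d / r) ^ δ * r ^ a ≤ d ^ a := by
  have hr : 0 < r := hd.trans_le hdr
  calc (d / r) ^ δ * r ^ a = d ^ δ * r ^ (a - δ) := by
        rw [Real.div_rpow hd.le hr.le, Real.rpow_sub hr]; ring
    _ ≤ d ^ δ * d ^ (a - δ) :=
        mul_le_mul_of_nonneg_left (Real.rpow_le_rpow_of_nonpos hd hdr (by linarith))
          (by positivity)
    _ = d ^ a := by rw [← Real.rpow_add hd]; ring_nf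

def HasAnnularDecay {X : Type*} [MetricSpace X] [MeasurableSpace X] (μ : Measure X)
    (δ K : ℝ) : Prop :=
  ∀ (x : X) (r ε : ℝ), 0 < r → 0 < ε → ε < 1 →
    μ (ball x r \ ball x (r * (1 - ε))) ≤ ENNReal.ofReal (K * ε ^ δ) * μ (ball x r)

/-- The part of `ball q (r + d)` outside `ball p r`, where `d = dist p q`, lies in the annulus
about `q` of radii `r - d` and `r + d`. -/
lemma HasAnnularDecay.measure_ball_sdiff_ball_le {X : Type*} [MetricSpace X]
    [MeasurableSpace X] {μ : Measure X} {δ K : ℝ} (h : HasAnnularDecay μ δ K) {p q : X} {r : ℝ}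
    (hpq : 0 < dist p q) (hr : dist p q < r) :
    μ (ball q (r + dist p q) \ ball p r) ≤
      ENNReal.ofReal (K * (2 * dist p q / (r + dist p q)) ^ δ) * μ (ball q (r + dist p q)) := by
  set d := dist p q
  have hR : 0 < r + d := by linarith
  have hannulus := h q (r + d) (2 * d / (r + d)) hR (by positivity)
    ((div_lt_one hR).2 (by linarith))
  rw [show (r + d) * (1 - 2 * d / (r + d)) = r - d by field_simp; ring] at hannulus
  refine (measure_mono (sdiff_subset_sdiff_right fun t ht => ?_)).trans hannulus
  rw [mem_ball] at ht ⊢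
  linarith [dist_triangle t q p, dist_comm q p]

lemma abs_abs_sub_abs_le_of_holderAt {X : Type*} [MetricSpace X] {f : X → ℝ} {a H : ℝ}
    (ha : 0 ≤ a) (hH : 0 ≤ H) {x : X} (hx : ∀ t, |f x - f t| ≤ H * dist x t ^ a) {ρ : ℝ} {t : X}
    (ht : t ∈ ball x ρ) :
    |(|f t| - |f x|)| ≤ H * ρ ^ a :=
  calc |(|f t| - |f x|)| ≤ |f x - f t| := by
        rw [abs_sub_comm (|f t|)]; exact abs_abs_sub_abs_le_abs_sub _ _
    _ ≤ H * dist x t ^ a := hx t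
    _ ≤ H * ρ ^ a := by gcongr; exact (mem_ball'.1 ht).le

lemma rpow_two_mul_div_add_mul_rpow_three_mul_le {d r a δ : ℝ} (hd : 0 < d) (hdr : d < r)
    (ha : a ∈ Icc 0 δ) (hδ : δ ≤ 1) :
    (2 * d / (r + d)) ^ δ * (3 * r) ^ a ≤ 3 * 2 ^ δ * d ^ a := by
  have hr : 0 < r := hd.trans hdr
  have h3 : (3 : ℝ) ^ a ≤ 3 := by
    simpa using Real.rpow_le_rpow_of_exponent_le (by norm_num : (1 : ℝ) ≤ 3) (ha.2.trans hδ)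
  calc (2 * d / (r + d)) ^ δ * (3 * r) ^ a ≤ (2 * (d / r)) ^ δ * (3 * r ^ a) := by
        rw [Real.mul_rpow (by norm_num) hr.le]
        gcongr
        · exact ha.1.trans ha.2
        · rw [mul_div_assoc]; gcongr; linarith
    _ = 3 * 2 ^ δ * ((d / r) ^ δ * r ^ a) := by
        rw [Real.mul_rpow (by norm_num) (by positivity)]; ring
    _ ≤ 3 * 2 ^ δ * d ^ a := by gcongr; exact rpow_div_mul_rpow_le hd hdr.le ha.2

section MaximalFunction

variable {X : Type*} [MetricSpace X] [MeasurableSpace X] {μ : Measure X} {f : X → ℝ} {C : ℝ}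

lemma maxFun_le_of_forall_setAverage_le {x : X} {c : ℝ}
    (h : ∀ r, 0 < r → ⨍ t in ball x r, |f t| ∂μ ≤ c) : maxFun μ f x ≤ c :=
  haveI : Nonempty {r : ℝ // 0 < r} := ⟨⟨1, one_pos⟩⟩
  ciSup_le fun r => h r.1 r.2

lemma maxFun_nonneg (x : X) : 0 ≤ maxFun μ f x :=
  Real.iSup_nonneg fun _ => by
    rw [setAverage_eq, smul_eq_mul]
    exact mul_nonneg (inv_nonneg.2 measureReal_nonneg) (integral_nonneg fun _ => abs_nonneg _)

variable [μ.IsOpenPosMeasure]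

lemma setAverage_ball_le (hfin : ∀ x r, μ (ball x r) ≠ ∞)
    (hint : ∀ x r, IntegrableOn (fun t => |f t|) (ball x r) μ) (hC : ∀ t, |f t| ≤ C)
    (x : X) {r : ℝ} (hr : 0 < r) : ⨍ t in ball x r, |f t| ∂μ ≤ C :=
  setAverage_le_of_forall_le (measure_ball_pos μ x hr).ne' (hfin x r) (hint x r)
    fun t _ => hC t

lemma maxFun_le (hfin : ∀ x r, μ (ball x r) ≠ ∞)
    (hint : ∀ x r, IntegrableOn (fun t => |f t|) (ball x r) μ) (hC : ∀ t, |f t| ≤ C) (x : X) :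
    maxFun μ f x ≤ C :=
  maxFun_le_of_forall_setAverage_le fun _ hr => setAverage_ball_le hfin hint hC x hr

lemma setAverage_ball_le_maxFun (hfin : ∀ x r, μ (ball x r) ≠ ∞)
    (hint : ∀ x r, IntegrableOn (fun t => |f t|) (ball x r) μ) (hC : ∀ t, |f t| ≤ C)
    (x : X) {r : ℝ} (hr : 0 < r) : ⨍ t in ball x r, |f t| ∂μ ≤ maxFun μ f x :=
  le_ciSup (f := fun r : {r : ℝ // 0 < r} => ⨍ t in ball x r.1, |f t| ∂μ)
    ⟨C, by rintro _ ⟨r, rfl⟩; exact setAverage_ball_le hfin hint hC x r.2⟩ ⟨r, hr⟩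

lemma setAverage_ball_le_maxFun_add_of_le (hfin : ∀ x r, μ (ball x r) ≠ ∞)
    (hint : ∀ x r, IntegrableOn (fun t => |f t|) (ball x r) μ) (hC : ∀ t, |f t| ≤ C)
    {x p q : X} {R r η : ℝ} (hr : 0 < r) (hrR : r ≤ R) (hp : dist x p ≤ R) (hq : dist x q ≤ R)
    (hη : ∀ t ∈ ball x (2 * R), |(|f t| - |f x|)| ≤ η) :
    ⨍ t in ball p r, |f t| ∂μ ≤ maxFun μ f q + 2 * η := by
  have hupper : ⨍ t in ball p r, |f t| ∂μ ≤ |f x| + η :=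
    setAverage_le_of_forall_le (measure_ball_pos μ p hr).ne' (hfin p r) (hint p r) fun t ht => by
      have := hη t (by rw [mem_ball] at ht ⊢; linarith [dist_triangle t p x, dist_comm x p])
      linarith [(abs_le.1 this).2]
  have hlower : |f x| - η ≤ ⨍ t in ball q R, |f t| ∂μ :=
    le_setAverage_of_forall_le (measure_ball_pos μ q (hr.trans_le hrR)).ne' (hfin q R)
      (hint q R) fun t ht => by
        have := hη t (by rw [mem_ball] at ht ⊢; linarith [dist_triangle t q x, dist_comm x q])
        linarith [(abs_le.1 this).1]
  linarith [setAverage_ball_le_maxFun hfin hint hC q (hr.trans_le hrR)]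

lemma setAverage_ball_le_maxFun_add_of_lt [OpensMeasurableSpace X] {δ K : ℝ}
    (hann : HasAnnularDecay μ δ K) (hK : 0 ≤ K) (hfin : ∀ x r, μ (ball x r) ≠ ∞)
    (hint : ∀ x r, IntegrableOn (fun t => |f t|) (ball x r) μ) (hC : ∀ t, |f t| ≤ C)
    {p q : X} {r m c : ℝ} (hpq : 0 < dist p q) (hr : dist p q < r)
    (hc : ∀ t ∈ ball q (r + dist p q), |(|f t| - m)| ≤ c) :
    ⨍ t in ball p r, |f t| ∂μ ≤
      maxFun μ f q + 2 * (K * (2 * dist p q / (r + dist p q)) ^ δ) * c := by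
  have hsub : ball p r ⊆ ball q (r + dist p q) := fun t ht => by
    rw [mem_ball] at ht ⊢
    linarith [dist_triangle t p q]
  have hcompare := setAverage_le_setAverage_add measurableSet_ball measurableSet_ball hsub
    (measure_ball_pos μ p (hpq.trans hr)).ne' (hfin _ _) (hint _ _)
    (by have := hpq.trans hr; positivity) hc (hann.measure_ball_sdiff_ball_le hpq hr)
  linarith [setAverage_ball_le_maxFun hfin hint hC q (r := r + dist p q) (by linarith)]

end MaximalFunction

section Holder

variable {X : Type*} [MetricSpace X] [MeasurableSpace X] [OpensMeasurableSpace X]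
  {μ : Measure X} [μ.IsOpenPosMeasure] {f : X → ℝ} {C : ℝ}

/-- Radii up to `dist p q` are compared through `|f x|`, larger ones through annular decay. -/
lemma maxFun_le_maxFun_add_of_holderAt {δ K : ℝ} (hann : HasAnnularDecay μ δ K) (hK : 1 ≤ K)
    (hfin : ∀ x r, μ (ball x r) ≠ ∞)
    (hint : ∀ x r, IntegrableOn (fun t => |f t|) (ball x r) μ) (hC : ∀ t, |f t| ≤ C)
    {a H : ℝ} (ha : a ∈ Icc 0 δ) (hδ : δ ≤ 1) (hH : 0 ≤ H) {x p q : X}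
    (hx : ∀ t, |f x - f t| ≤ H * dist x t ^ a) (hxp : dist x p ≤ dist p q)
    (hxq : dist x q ≤ dist p q) (hpq : 0 < dist p q) :
    maxFun μ f p ≤ maxFun μ f q + 6 * K * 2 ^ δ * H * dist p q ^ a := by
  set d := dist p q
  have h2δ : (1 : ℝ) ≤ 2 ^ δ := Real.one_le_rpow one_le_two (ha.1.trans ha.2)
  refine maxFun_le_of_forall_setAverage_le fun r hr => ?_
  rcases le_or_gt r d with hrd | hdr
  · have h2a : (2 : ℝ) ^ a ≤ 2 ^ δ := Real.rpow_le_rpow_of_exponent_le one_le_two ha.2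
    calc ⨍ t in ball p r, |f t| ∂μ ≤ maxFun μ f q + 2 * (H * (2 * d) ^ a) :=
          setAverage_ball_le_maxFun_add_of_le hfin hint hC hr hrd hxp hxq
            fun t => abs_abs_sub_abs_le_of_holderAt ha.1 hH hx
      _ ≤ maxFun μ f q + 6 * K * 2 ^ δ * H * d ^ a := by
          rw [Real.mul_rpow zero_le_two hpq.le]
          have : 0 ≤ H * d ^ a := by positivity
          nlinarith [mul_le_mul_of_nonneg_right h2a this, mul_le_mul_of_nonneg_right h2δ this]
  · have hc : ∀ t ∈ ball q (r + d), |(|f t| - |f x|)| ≤ H * (3 * r) ^ a := fun t ht =>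
      abs_abs_sub_abs_le_of_holderAt ha.1 hH hx (mem_ball.2 (by
        linarith [dist_triangle t q x, dist_comm x q, mem_ball.1 ht]))
    calc ⨍ t in ball p r, |f t| ∂μ
        ≤ maxFun μ f q + 2 * (K * (2 * d / (r + d)) ^ δ) * (H * (3 * r) ^ a) :=
          setAverage_ball_le_maxFun_add_of_lt hann (by linarith) hfin hint hC hpq hdr hc
      _ = maxFun μ f q + 2 * K * H * ((2 * d / (r + d)) ^ δ * (3 * r) ^ a) := by ring
      _ ≤ maxFun μ f q + 2 * K * H * (3 * 2 ^ δ * d ^ a) := by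
          have hK0 : 0 ≤ K := by linarith
          grw [rpow_two_mul_div_add_mul_rpow_three_mul_le hpq hdr ha hδ]
      _ = maxFun μ f q + 6 * K * 2 ^ δ * H * d ^ a := by ring

lemma abs_maxFun_sub_le_of_holderAt {δ K : ℝ} (hann : HasAnnularDecay μ δ K) (hK : 1 ≤ K)
    (hfin : ∀ x r, μ (ball x r) ≠ ∞)
    (hint : ∀ x r, IntegrableOn (fun t => |f t|) (ball x r) μ) (hC : ∀ t, |f t| ≤ C)
    {a H : ℝ} (ha : a ∈ Icc 0 δ) (hδ : δ ≤ 1) (hH : 0 ≤ H) {u v : X}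
    (hu : ∀ t, |f u - f t| ≤ H * dist u t ^ a) (huv : u ≠ v) :
    |maxFun μ f u - maxFun μ f v| ≤ 6 * K * 2 ^ δ * H * dist u v ^ a := by
  have hd := dist_pos.2 huv
  have huv' := maxFun_le_maxFun_add_of_holderAt (p := u) (q := v) hann hK hfin hint hC ha hδ hH
    hu (by simp) le_rfl hd
  have hvu := maxFun_le_maxFun_add_of_holderAt (p := v) (q := u) hann hK hfin hint hC ha hδ hH
    hu (dist_comm u v).le (by simp) (dist_comm u v ▸ hd)
  rw [dist_comm v u] at hvu
  rw [abs_sub_le_iff]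
  constructor <;> linarith

end Holder

section Continuity

variable {X : Type*} [MetricSpace X] [MeasurableSpace X] [OpensMeasurableSpace X]
  {μ : Measure X} [μ.IsOpenPosMeasure] {f : X → ℝ} {C : ℝ}

/-- Small radii are handled by the continuity of `f` at `x`, large radii by annular decay,
whose error term vanishes as the two points merge. -/
lemma continuous_maxFun {δ K : ℝ} (hann : HasAnnularDecay μ δ K) (hδ : 0 < δ) (hK : 0 ≤ K)
    (hfin : ∀ x r, μ (ball x r) ≠ ∞)
    (hint : ∀ x r, IntegrableOn (fun t => |f t|) (ball x r) μ) (hC : ∀ t, |f t| ≤ C)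
    (hf : Continuous f) : Continuous (maxFun μ f) := by
  rw [Metric.continuous_iff']
  intro x ε hε
  obtain ⟨ρ, hρ, hfρ⟩ := Metric.continuous_iff.1 hf x (ε / 4) (by positivity)
  obtain ⟨R, hR, rfl⟩ : ∃ R, 0 < R ∧ ρ = 2 * R := ⟨ρ / 2, by positivity, by ring⟩
  have hosc : ∀ t ∈ ball x (2 * R), |(|f t| - |f x|)| ≤ ε / 4 := fun t ht =>
    (abs_abs_sub_abs_le_abs_sub _ _).trans (hfρ t ht).le
  have hC0 : 0 ≤ C := (abs_nonneg _).trans (hC x)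
  have herr : Tendsto (fun y => 2 * (K * (2 * dist y x / R) ^ δ) * C) (nhds x) (nhds 0) := by
    have : Continuous fun y => 2 * (K * (2 * dist y x / R) ^ δ) * C := by
      fun_prop (disch := exact hδ.le)
    simpa [Real.zero_rpow hδ.ne'] using this.tendsto x
  have hside : ∀ p q, dist p q ≤ R → dist x p ≤ dist p q → dist x q ≤ dist p q →
      0 < dist p q →
      maxFun μ f p ≤ maxFun μ f q + ε / 2 + 2 * (K * (2 * dist p q / R) ^ δ) * C := by
    intro p q hpqR hxp hxq hpq
    have herr_nonneg : 0 ≤ 2 * (K * (2 * dist p q / R) ^ δ) * C := by positivity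
    refine maxFun_le_of_forall_setAverage_le fun r hr => ?_
    rcases le_or_gt r R with hrR | hRr
    · linarith [setAverage_ball_le_maxFun_add_of_le hfin hint hC hr hrR (hxp.trans hpqR)
        (hxq.trans hpqR) hosc]
    · calc ⨍ t in ball p r, |f t| ∂μ
          ≤ maxFun μ f q + 2 * (K * (2 * dist p q / (r + dist p q)) ^ δ) * C :=
            setAverage_ball_le_maxFun_add_of_lt hann hK hfin hint hC (m := 0) hpq
              (hpqR.trans_lt hRr) fun t _ => by rw [sub_zero, abs_abs]; exact hC t
        _ ≤ maxFun μ f q + ε / 2 + 2 * (K * (2 * dist p q / R) ^ δ) * C := by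
            have : 2 * dist p q / (r + dist p q) ≤ 2 * dist p q / R := by
              gcongr; linarith
            grw [this]
            linarith
  filter_upwards [herr.eventually (gt_mem_nhds (by positivity : (0 : ℝ) < ε / 2)),
    ball_mem_nhds x hR] with y hy hyR
  rcases eq_or_ne y x with rfl | hyx
  · simpa using hε
  have hd : 0 < dist y x := dist_pos.2 hyx
  rw [mem_ball] at hyR
  have hyx' := hside y x hyR.le (by rw [dist_comm]) (by simp) hd
  have hxy := hside x y (by rw [dist_comm]; exact hyR.le) (by simp) (by rw [dist_comm])
    (by rwa [dist_comm])
  rw [dist_comm x y] at hxy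
  rw [Real.dist_eq, abs_sub_lt_iff]
  constructor <;> linarith

end Continuity

section VarHolder

variable {X : Type*} [MetricSpace X] {α : X → ℝ} {f : X → ℝ}

lemma holderSemi_nonneg : 0 ≤ holderSemi α f :=
  Real.iSup_nonneg fun _ => div_nonneg (abs_nonneg _) (Real.rpow_nonneg dist_nonneg _)

lemma MemVarHolder.abs_le_iSup (hf : MemVarHolder α f) (x : X) : |f x| ≤ ⨆ x, |f x| :=
  le_ciSup hf.2.1 x

lemma MemVarHolder.abs_sub_le (hf : MemVarHolder α f) (u v : X) :
    |f u - f v| ≤ holderSemi α f * dist u v ^ α u := by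
  rcases eq_or_ne u v with rfl | huv
  · simpa using mul_nonneg holderSemi_nonneg (Real.rpow_nonneg le_rfl _)
  · rw [← div_le_iff₀ (Real.rpow_pos_of_pos (dist_pos.2 huv) _)]
    exact le_ciSup hf.2.2 ⟨(u, v), huv⟩

lemma abs_sub_div_dist_rpow_le {B : ℝ} (hf : ∀ u v, u ≠ v → |f u - f v| ≤ B * dist u v ^ α u)
    (p : {p : X × X // p.1 ≠ p.2}) : |f p.1.1 - f p.1.2| / dist p.1.1 p.1.2 ^ α p.1.1 ≤ B :=
  (div_le_iff₀ (Real.rpow_pos_of_pos (dist_pos.2 p.2) _)).2 (hf _ _ p.2)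

lemma MemVarHolder.of_bounds {A B : ℝ} (hf : Continuous f) (hA : ∀ x, |f x| ≤ A)
    (hB : ∀ u v, u ≠ v → |f u - f v| ≤ B * dist u v ^ α u) : MemVarHolder α f :=
  ⟨hf, ⟨A, forall_mem_range.2 hA⟩, ⟨B, forall_mem_range.2 (abs_sub_div_dist_rpow_le hB)⟩⟩

lemma holderNorm_le {A B : ℝ} (hA0 : 0 ≤ A) (hB0 : 0 ≤ B) (hA : ∀ x, |f x| ≤ A)
    (hB : ∀ u v, u ≠ v → |f u - f v| ≤ B * dist u v ^ α u) : holderNorm α f ≤ A + B :=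
  add_le_add (Real.iSup_le hA hA0) (Real.iSup_le (abs_sub_div_dist_rpow_le hB) hB0)

end VarHolder

/-- Boundedness of the Hardy–Littlewood maximal operator on variable
exponent Hölder spaces over a metric measure space with the δ-annular decay property. -/
theorem maximal_bounded_on_variable_holder
    {X : Type*} [MetricSpace X] [MeasurableSpace X] [BorelSpace X] (μ : Measure X)
    (hopen : ∀ U : Set X, IsOpen U → U.Nonempty → 0 < μ U)
    (hbdd : ∀ s : Set X, Bornology.IsBounded s → μ s < ⊤)
    (δ K : ℝ) (hδ : δ ∈ Set.Ioc (0 : ℝ) 1) (hK : 1 ≤ K)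
    (hann : ∀ (x : X) (r ε : ℝ), 0 < r → 0 < ε → ε < 1 →
      μ (ball x r \ ball x (r * (1 - ε))) ≤ ENNReal.ofReal (K * ε ^ δ) * μ (ball x r))
    (α : X → ℝ) (hα : ∀ x, α x ∈ Set.Icc (0 : ℝ) δ) :
    ∀ f : X → ℝ, MemVarHolder α f →
      MemVarHolder α (maxFun μ f) ∧
      holderNorm α (maxFun μ f) ≤ max 7 (1 + 12 * K * 2 ^ δ) * holderNorm α f := by
  intro f hf
  have : μ.IsOpenPosMeasure := ⟨fun U hU hne => (hopen U hU hne).ne'⟩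
  have hfin : ∀ x r, μ (ball x r) ≠ ∞ := fun x r => (hbdd _ isBounded_ball).ne
  set C := ⨆ x, |f x|
  set H := holderSemi α f
  have hC : ∀ t, |f t| ≤ C := hf.abs_le_iSup
  have hC0 : 0 ≤ C := Real.iSup_nonneg fun _ => abs_nonneg _
  have hH0 : 0 ≤ H := holderSemi_nonneg
  have hint : ∀ x r, IntegrableOn (fun t => |f t|) (ball x r) μ := fun x r =>
    Measure.integrableOn_of_bounded (hfin x r) hf.1.abs.aestronglyMeasurable
      (ae_of_all _ fun t => (abs_abs (f t)).trans_le (hC t))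
  have hMf : ∀ u v, u ≠ v →
      |maxFun μ f u - maxFun μ f v| ≤ 6 * K * 2 ^ δ * H * dist u v ^ α u := fun u _ =>
    abs_maxFun_sub_le_of_holderAt hann hK hfin hint hC (hα u) hδ.2 hH0 (hf.abs_sub_le u)
  have hMfC : ∀ x, |maxFun μ f x| ≤ C := fun x => by
    rw [abs_of_nonneg (maxFun_nonneg x)]
    exact maxFun_le hfin hint hC x
  have hK2δ : 1 ≤ K * 2 ^ δ :=
    one_le_mul_of_one_le_of_one_le hK (Real.one_le_rpow one_le_two hδ.1.le)
  refine ⟨.of_bounds (continuous_maxFun hann hδ.1 (by linarith) hfin hint hC hf.1) hMfC hMf, ?_⟩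
  calc holderNorm α (maxFun μ f) ≤ C + 6 * K * 2 ^ δ * H :=
        holderNorm_le hC0 (by positivity) hMfC hMf
    _ ≤ max 7 (1 + 12 * K * 2 ^ δ) * (C + H) := by
        have h1 : 1 ≤ max 7 (1 + 12 * K * 2 ^ δ) := le_max_of_le_left (by norm_num)
        have h2 : 6 * (K * 2 ^ δ) ≤ max 7 (1 + 12 * K * 2 ^ δ) := le_max_of_le_right (by linarith)
        nlinarith
end

section
/- There exist functions $f\in C^{0,1}(\mathbb{R})$ and a sequence $(f_n)\subset C^{0,1}(\mathbb{R})$ such that $\|f_n-f\|_{C^{0,1}(\mathbb{R})}\to 0$ but $\|Mf_n-Mf\|_{C^{0,1}(\mathbb{R})}\not\to 0$; i.e., the Hardy–Littlewood maximal operator is discontinuous on $C^{0,1}(\mathbb{R})$. -/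
/-!
Take `f = clamp` (truncation to `[-1, 1]`) and `fₕ = f + h`, so that `‖fₕ - f‖ = h`. Since
`|f| = 1` off a bounded set, `M f ≡ 1`. But `M fₕ (1) ≥ |fₕ (1)| = 1 + h`, whereas at `1 - h`
every centred average of `|fₕ|` is at most `1`, because `|fₕ (1 - h + s)| + |fₕ (1 - h - s)| ≤ 2`
for all `s`. So `M fₕ - M f` rises by `h` over an interval of length `h`, and its Lipschitz
constant stays `≥ 1` as `h → 0`.
-/

open MeasureTheory Metric Set Filter

noncomputable def maxFunR (f : ℝ → ℝ) (x : ℝ) : ℝ :=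
  ⨆ r : {r : ℝ // 0 < r}, (1 / (2 * r.1)) * ∫ t in x - r.1..x + r.1, |f t|

section Holder

variable {X : Type*} [MetricSpace X]

lemma LipschitzWith.bddAbove_holderQuotient_one {K : NNReal} {f : X → ℝ}
    (hf : LipschitzWith K f) :
    BddAbove (range fun p : {p : X × X // p.1 ≠ p.2} =>
      |f p.1.1 - f p.1.2| / dist p.1.1 p.1.2 ^ (fun _ : X => (1 : ℝ)) p.1.1) := by
  refine ⟨K, ?_⟩
  rintro _ ⟨⟨⟨x, y⟩, -⟩, rfl⟩
  show |f x - f y| / dist x y ^ (1 : ℝ) ≤ K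
  rw [Real.rpow_one, ← Real.dist_eq]
  exact div_le_of_le_mul₀ dist_nonneg K.coe_nonneg (hf.dist_le_mul x y)

lemma LipschitzWith.memVarHolder_one {K : NNReal} {f : X → ℝ} (hf : LipschitzWith K f)
    (hb : BddAbove (range fun x => |f x|)) : MemVarHolder (fun _ => (1 : ℝ)) f :=
  ⟨hf.continuous, hb, hf.bddAbove_holderQuotient_one⟩

lemma holderNorm_const [Nonempty X] (α : X → ℝ) (c : ℝ) :
    holderNorm α (fun _ => c) = |c| := by
  simp [holderNorm, holderSemi]

lemma le_holderSemi {α : X → ℝ} {f : X → ℝ}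
    (hb : BddAbove (range fun p : {p : X × X // p.1 ≠ p.2} =>
      |f p.1.1 - f p.1.2| / dist p.1.1 p.1.2 ^ α p.1.1)) {x y : X} (hxy : x ≠ y) :
    |f x - f y| / dist x y ^ α x ≤ holderSemi α f :=
  le_ciSup hb ⟨(x, y), hxy⟩

lemma holderSemi_le_holderNorm (α : X → ℝ) (f : X → ℝ) : holderSemi α f ≤ holderNorm α f :=
  le_add_of_nonneg_left (Real.iSup_nonneg fun _ => abs_nonneg _)

end Holder

noncomputable def absAvg (f : ℝ → ℝ) (x r : ℝ) : ℝ :=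
  (1 / (2 * r)) * ∫ t in x - r..x + r, |f t|

section MaximalFunction

lemma maxFunR_eq_iSup_absAvg (f : ℝ → ℝ) (x : ℝ) :
    maxFunR f x = ⨆ r : {r : ℝ // 0 < r}, absAvg f x r := rfl

lemma integral_abs_eq_integral_comp_add (f : ℝ → ℝ) (x r : ℝ) :
    ∫ t in x - r..x + r, |f t| = ∫ s in -r..r, |f (x + s)| := by
  rw [intervalIntegral.integral_comp_add_left (fun t => |f t|), ← sub_eq_add_neg]

lemma integral_abs_eq_integral_comp_sub (f : ℝ → ℝ) (x r : ℝ) :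
    ∫ t in x - r..x + r, |f t| = ∫ s in -r..r, |f (x - s)| := by
  rw [intervalIntegral.integral_comp_sub_left (fun t => |f t|), sub_neg_eq_add]

variable {f : ℝ → ℝ}

lemma mul_sub_le_integral_of_le {g : ℝ → ℝ} (hg : Continuous g) {a b c : ℝ} (hab : a ≤ b)
    (hc : ∀ t ∈ Icc a b, c ≤ g t) : c * (b - a) ≤ ∫ t in a..b, g t := by
  have := intervalIntegral.integral_mono_on hab (intervalIntegrable_const (μ := volume))
    (hg.intervalIntegrable a b) hc
  rwa [intervalIntegral.integral_const, smul_eq_mul, mul_comm] at this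

lemma integral_le_mul_sub_of_le {g : ℝ → ℝ} (hg : Continuous g) {a b c : ℝ} (hab : a ≤ b)
    (hc : ∀ t ∈ Icc a b, g t ≤ c) : ∫ t in a..b, g t ≤ c * (b - a) := by
  have := intervalIntegral.integral_mono_on hab (hg.intervalIntegrable a b)
    (intervalIntegrable_const (μ := volume)) hc
  rwa [intervalIntegral.integral_const, smul_eq_mul, mul_comm] at this

lemma absAvg_le_of_abs_add_abs_le (hf : Continuous f) {x r A : ℝ} (hr : 0 < r)
    (hA : ∀ s, |f (x + s)| + |f (x - s)| ≤ 2 * A) : absAvg f x r ≤ A := by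
  have hint : 2 * ∫ t in x - r..x + r, |f t| ≤ 2 * A * (2 * r) := by
    calc 2 * ∫ t in x - r..x + r, |f t|
        = ∫ s in -r..r, (|f (x + s)| + |f (x - s)|) := by
          rw [intervalIntegral.integral_add
              ((by fun_prop : Continuous fun s => |f (x + s)|).intervalIntegrable ..)
              ((by fun_prop : Continuous fun s => |f (x - s)|).intervalIntegrable ..),
            ← integral_abs_eq_integral_comp_add, ← integral_abs_eq_integral_comp_sub, two_mul]
      _ ≤ 2 * A * (2 * r) := by
          convert integral_le_mul_sub_of_le (a := -r) (b := r) (by fun_prop) (by linarith)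
            fun s _ => hA s using 1
          ring
  unfold absAvg
  rw [div_mul_eq_mul_div, one_mul, div_le_iff₀ (by positivity)]
  linarith

lemma le_absAvg_of_le (hf : Continuous f) {x r A : ℝ} (hr : 0 < r)
    (hA : ∀ t ∈ Icc (x - r) (x + r), A ≤ |f t|) : A ≤ absAvg f x r := by
  have := mul_sub_le_integral_of_le (by fun_prop) (by linarith) hA
  unfold absAvg
  rw [div_mul_eq_mul_div, one_mul, le_div_iff₀ (by positivity)]
  linarith

lemma absAvg_le_of_abs_le (hf : Continuous f) {C : ℝ} (hC : ∀ t, |f t| ≤ C) (x : ℝ) {r : ℝ}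
    (hr : 0 < r) : absAvg f x r ≤ C :=
  absAvg_le_of_abs_add_abs_le hf hr fun s => by linarith [hC (x + s), hC (x - s)]

lemma bddAbove_absAvg (hf : Continuous f) {C : ℝ} (hC : ∀ t, |f t| ≤ C) (x : ℝ) :
    BddAbove (range fun r : {r : ℝ // 0 < r} => absAvg f x r) :=
  ⟨C, by rintro _ ⟨r, rfl⟩; exact absAvg_le_of_abs_le hf hC x r.2⟩

lemma absAvg_le_maxFunR (hf : Continuous f) {C : ℝ} (hC : ∀ t, |f t| ≤ C) (x : ℝ) {r : ℝ}
    (hr : 0 < r) : absAvg f x r ≤ maxFunR f x :=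
  le_ciSup (bddAbove_absAvg hf hC x) ⟨r, hr⟩

lemma maxFunR_le_of_forall_absAvg_le {x A : ℝ} (h : ∀ r, 0 < r → absAvg f x r ≤ A) :
    maxFunR f x ≤ A :=
  ciSup_le fun r => h r r.2

lemma abs_le_maxFunR (hf : Continuous f) {C : ℝ} (hC : ∀ t, |f t| ≤ C) (x : ℝ) :
    |f x| ≤ maxFunR f x := by
  refine le_of_forall_pos_le_add fun ε hε => ?_
  obtain ⟨δ, hδ, hclose⟩ := Metric.continuous_iff.1 hf.abs x ε hε
  have hball : ∀ t ∈ Icc (x - δ / 2) (x + δ / 2), |f x| - ε ≤ |f t| := by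
    intro t ht
    have hdist : dist t x < δ := by
      rw [Real.dist_eq, abs_lt]; constructor <;> linarith [ht.1, ht.2]
    have := hclose t hdist
    rw [Real.dist_eq, abs_lt] at this
    linarith
  linarith [le_absAvg_of_le hf (half_pos hδ) hball, absAvg_le_maxFunR hf hC x (half_pos hδ)]

lemma absAvg_le_add_of_lipschitzWith {K : NNReal} (hf : LipschitzWith K f) (x y : ℝ) {r : ℝ}
    (hr : 0 < r) : absAvg f x r ≤ absAvg f y r + K * dist x y := by
  have hpt : ∀ s, |f (x + s)| ≤ |f (y + s)| + K * dist x y := fun s => by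
    have h := (abs_sub_abs_le_abs_sub (f (x + s)) (f (y + s))).trans
      (hf.dist_le_mul (x + s) (y + s))
    rw [Real.dist_eq (x + s), add_sub_add_right_eq_sub, ← Real.dist_eq] at h
    linarith
  have hc := hf.continuous
  have hxs : Continuous fun s => |f (x + s)| := by fun_prop
  have hys : Continuous fun s => |f (y + s)| := by fun_prop
  have hint :
      ∫ s in -r..r, |f (x + s)| ≤ (∫ s in -r..r, |f (y + s)|) + 2 * r * (K * dist x y) := by
    calc ∫ s in -r..r, |f (x + s)| ≤ ∫ s in -r..r, (|f (y + s)| + K * dist x y) :=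
          intervalIntegral.integral_mono_on (by linarith) (hxs.intervalIntegrable _ _)
            ((hys.add continuous_const).intervalIntegrable _ _) fun s _ => hpt s
      _ = _ := by
          rw [intervalIntegral.integral_add (hys.intervalIntegrable _ _) intervalIntegrable_const,
            intervalIntegral.integral_const, smul_eq_mul]
          ring
  unfold absAvg
  rw [integral_abs_eq_integral_comp_add, integral_abs_eq_integral_comp_add]
  calc 1 / (2 * r) * ∫ s in -r..r, |f (x + s)|
      ≤ 1 / (2 * r) * ((∫ s in -r..r, |f (y + s)|) + 2 * r * (K * dist x y)) := by gcongr
    _ = _ := by field_simp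

theorem LipschitzWith.maxFunR {K : NNReal} (hf : LipschitzWith K f) :
    LipschitzWith K (maxFunR f) := by
  refine LipschitzWith.of_le_add_mul K fun x y => ?_
  by_cases hy : BddAbove (range fun r : {r : ℝ // 0 < r} => absAvg f y r)
  · exact ciSup_le fun r =>
      (absAvg_le_add_of_lipschitzWith hf x y r.2).trans (by gcongr; exact le_ciSup hy r)
  · have hx : ¬ BddAbove (range fun r : {r : ℝ // 0 < r} => absAvg f x r) := by
      rintro ⟨B, hB⟩
      refine hy ⟨B + K * dist y x, ?_⟩
      rintro _ ⟨r, rfl⟩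
      exact (absAvg_le_add_of_lipschitzWith hf y x r.2).trans (by gcongr; exact hB ⟨r, rfl⟩)
    rw [maxFunR_eq_iSup_absAvg, maxFunR_eq_iSup_absAvg, Real.iSup_of_not_bddAbove hx,
      Real.iSup_of_not_bddAbove hy, zero_add]
    positivity

end MaximalFunction

noncomputable def clamp (t : ℝ) : ℝ := max (-1) (min 1 t)

section Clamp

lemma lipschitzWith_clamp : LipschitzWith 1 clamp :=
  (LipschitzWith.id.const_min 1).const_max (-1)

lemma continuous_clamp : Continuous clamp := lipschitzWith_clamp.continuous

lemma abs_clamp_le_one (t : ℝ) : |clamp t| ≤ 1 :=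
  abs_le.2 ⟨le_max_left _ _, max_le (by norm_num) (min_le_left _ _)⟩

lemma abs_clamp_of_one_le_abs {t : ℝ} (ht : 1 ≤ |t|) : |clamp t| = 1 := by
  unfold clamp
  rcases le_abs'.1 ht with h | h
  · rw [min_eq_right (by linarith), max_eq_left h, abs_neg, abs_one]
  · rw [min_eq_left h, max_eq_right (by norm_num), abs_one]

lemma maxFunR_clamp (x : ℝ) : maxFunR clamp x = 1 := by
  refine le_antisymm (maxFunR_le_of_forall_absAvg_le fun r hr =>
    absAvg_le_of_abs_le continuous_clamp abs_clamp_le_one x hr) ?_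
  -- `|clamp| = 1` off `[-1, 1]`, so the integral over `[x - r, x + r]` is at least `2 r - 2`
  have hlarge : ∀ r, |x| + 1 ≤ r → 1 - 1 / r ≤ absAvg clamp x r := by
    intro r hr
    have hr0 : 0 < r := by linarith [abs_nonneg x]
    have hxr : x - r ≤ -1 ∧ 1 ≤ x + r := by
      constructor <;> linarith [le_abs_self x, neg_abs_le x]
    have hint := continuous_clamp.abs.intervalIntegrable (μ := volume)
    have hleft := mul_sub_le_integral_of_le continuous_clamp.abs hxr.1
      fun t ht => (abs_clamp_of_one_le_abs (le_abs'.2 (Or.inl (by linarith [ht.2])))).ge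
    have hright := mul_sub_le_integral_of_le continuous_clamp.abs hxr.2
      fun t ht => (abs_clamp_of_one_le_abs (le_abs'.2 (Or.inr ht.1))).ge
    have hmid : 0 ≤ ∫ t in (-1 : ℝ)..1, |clamp t| :=
      intervalIntegral.integral_nonneg (by norm_num) fun t _ => abs_nonneg _
    have hsplit : ∫ t in x - r..x + r, |clamp t| = (∫ t in x - r..(-1), |clamp t|)
        + (∫ t in (-1 : ℝ)..1, |clamp t|) + ∫ t in (1 : ℝ)..x + r, |clamp t| := by
      rw [intervalIntegral.integral_add_adjacent_intervals (hint _ _) (hint _ _),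
        intervalIntegral.integral_add_adjacent_intervals (hint _ _) (hint _ _)]
    unfold absAvg
    rw [hsplit]
    calc 1 - 1 / r = 1 / (2 * r) * (2 * r - 2) := by field_simp
      _ ≤ _ := by gcongr; linarith
  have hlim : Tendsto (fun r : ℝ => 1 - 1 / r) atTop (nhds 1) := by
    simpa using tendsto_const_nhds.sub (tendsto_inv_atTop_zero (𝕜 := ℝ))
  refine le_of_tendsto hlim ?_
  filter_upwards [eventually_ge_atTop (|x| + 1)] with r hr
  exact (hlarge r hr).trans
    (absAvg_le_maxFunR continuous_clamp abs_clamp_le_one x (by linarith [abs_nonneg x]))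

end Clamp

section ClampAdd

variable {h : ℝ}

lemma abs_clamp_add_le (c t : ℝ) : |clamp t + c| ≤ 1 + |c| :=
  (abs_add_le _ _).trans (by linarith [abs_clamp_le_one t])

lemma continuous_clamp_add (c : ℝ) : Continuous fun t => clamp t + c :=
  continuous_clamp.add continuous_const

lemma lipschitzWith_clamp_add (c : ℝ) : LipschitzWith 1 fun t => clamp t + c := by
  simpa using lipschitzWith_clamp.add (LipschitzWith.const c)

lemma memVarHolder_one_clamp_add (c : ℝ) :
    MemVarHolder (fun _ => (1 : ℝ)) fun t => clamp t + c :=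
  (lipschitzWith_clamp_add c).memVarHolder_one ⟨1 + |c|, by
    rintro _ ⟨t, rfl⟩; exact abs_clamp_add_le c t⟩

-- For `|s| ≤ h` both points lie on the linear part of `clamp`, where the values are `1 ± s`;
-- otherwise the left one has modulus at most `1 - h` and the right one at most `1 + h`.
lemma abs_clamp_add_add_abs_clamp_add_le (h0 : 0 ≤ h) (h1 : h ≤ 1) (s : ℝ) :
    |clamp (1 - h + s) + h| + |clamp (1 - h - s) + h| ≤ 2 := by
  simp only [clamp, abs_eq_max_neg, max_def, min_def]
  split_ifs <;> linarith

lemma maxFunR_clamp_add_le_one (h0 : 0 ≤ h) (h1 : h ≤ 1) :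
    maxFunR (fun t => clamp t + h) (1 - h) ≤ 1 :=
  maxFunR_le_of_forall_absAvg_le fun _ hr =>
    absAvg_le_of_abs_add_abs_le (continuous_clamp_add h) hr
      fun s => by linarith [abs_clamp_add_add_abs_clamp_add_le h0 h1 s]

lemma one_add_le_maxFunR_clamp_add (h0 : 0 ≤ h) : 1 + h ≤ maxFunR (fun t => clamp t + h) 1 := by
  have := abs_le_maxFunR (continuous_clamp_add h) (abs_clamp_add_le h) 1
  rwa [show clamp 1 = 1 by norm_num [clamp], abs_of_nonneg (by linarith)] at this

lemma one_le_holderNorm_maxFunR_clamp_add_sub (h0 : 0 < h) (h1 : h ≤ 1) :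
    1 ≤ holderNorm (fun _ => (1 : ℝ))
      (fun x => maxFunR (fun t => clamp t + h) x - maxFunR clamp x) := by
  -- the Hölder quotients must be bounded, since `⨆` of an unbounded family of reals is `0`
  have hg : LipschitzWith 2 fun x => maxFunR (fun t => clamp t + h) x - maxFunR clamp x := by
    simpa only [one_add_one_eq_two] using
      (lipschitzWith_clamp_add h).maxFunR.sub lipschitzWith_clamp.maxFunR
  have hjump : h ≤ (maxFunR (fun t => clamp t + h) 1 - maxFunR clamp 1)
      - (maxFunR (fun t => clamp t + h) (1 - h) - maxFunR clamp (1 - h)) := by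
    rw [maxFunR_clamp, maxFunR_clamp]
    linarith [one_add_le_maxFunR_clamp_add h0.le, maxFunR_clamp_add_le_one h0.le h1]
  have hdist : dist 1 (1 - h) = h := by
    rw [Real.dist_eq, sub_sub_cancel, abs_of_pos h0]
  refine le_trans ?_ ((le_holderSemi hg.bddAbove_holderQuotient_one (x := 1) (y := 1 - h)
    (by linarith)).trans (holderSemi_le_holderNorm _ _))
  rw [Real.rpow_one, hdist, le_div_iff₀ h0, one_mul]
  exact hjump.trans (le_abs_self _)

end ClampAdd

/-- The maximal operator is discontinuous on `C^{0,1}(ℝ)`. -/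
theorem maximal_discontinuous_on_lipschitz :
    ∃ (f : ℝ → ℝ) (fn : ℕ → ℝ → ℝ),
      MemVarHolder (fun _ => (1 : ℝ)) f ∧ (∀ n, MemVarHolder (fun _ => (1 : ℝ)) (fn n)) ∧
      Tendsto (fun n => holderNorm (fun _ => (1 : ℝ)) (fun x => fn n x - f x)) atTop (nhds 0) ∧
      ¬ Tendsto (fun n => holderNorm (fun _ => (1 : ℝ))
          (fun x => maxFunR (fn n) x - maxFunR f x)) atTop (nhds 0) := by
  have hpos : ∀ n : ℕ, 0 < 1 / ((n : ℝ) + 1) := fun _ => by positivity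
  have hle : ∀ n : ℕ, 1 / ((n : ℝ) + 1) ≤ 1 := fun n =>
    div_le_one_of_le₀ (by linarith [n.cast_nonneg (α := ℝ)]) (by positivity)
  refine ⟨clamp, fun n t => clamp t + 1 / ((n : ℝ) + 1),
    by simpa using memVarHolder_one_clamp_add 0, fun _ => memVarHolder_one_clamp_add _, ?_,
    fun hT => ?_⟩
  · simpa [holderNorm_const, abs_of_pos (Nat.cast_add_one_pos (α := ℝ) _)] using
      tendsto_one_div_add_atTop_nhds_zero_nat (𝕜 := ℝ)
  · have := ge_of_tendsto' hT fun n => one_le_holderNorm_maxFunR_clamp_add_sub (hpos n) (hle n)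
    norm_num at this
end

section
/- Let $T>0$ and let $f\colon\mathbb{R}\to\mathbb{R}$ be continuous and $T$-periodic. Then for every $x\in\mathbb{R}$ there exists $r\in[0,T]$ such that $Mf(x)=\frac{1}{2r}\int_{x-r}^{x+r}|f(t)|\,dt$ (with the average interpreted as $|f(x)|$ when $r=0$). -/
/-!
Let `A(r)` be the average of `|f|` over `[x - r, x + r]`. It is half the difference quotient at `0`
of the differentiable map `r ↦ ∫ t in x - r..x + r, |f t|`, whose derivative at `0` is `2 |f x|`;
hence `A` is continuous with `A(0) = |f x|` and attains its maximum on `[0, T]`. By periodicity,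
adding `T` to the radius adds the integral over `[x - T, x + T]`, so for `r = s + n T` with
`s ∈ [0, T)` the average `A(r)` is a convex combination of `A(s)` and `A(T)`: the maximum over
`[0, T]` bounds the supremum over all `r > 0`.
-/

open MeasureTheory Metric Set Filter

/-- Average of `|f|` over `[x-r, x+r]`, interpreted as `|f x|` when `r = 0`. -/
noncomputable def avgAbs (f : ℝ → ℝ) (x r : ℝ) : ℝ :=
  if r = 0 then |f x| else (1 / (2 * r)) * ∫ t in x - r..x + r, |f t|

open intervalIntegral

namespace Function.Periodic

variable {g : ℝ → ℝ} {T : ℝ}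

theorem intervalIntegral_symm_add_period (hg : Periodic g T)
    (hint : ∀ a b, IntervalIntegrable g volume a b) (x r : ℝ) :
    ∫ t in x - (r + T)..x + (r + T), g t =
      (∫ t in x - r..x + r, g t) + ∫ t in x - T..x + T, g t := by
  have hleft : ∫ t in x - (r + T)..x - r, g t = ∫ t in x - T..x, g t := by
    simpa only [sub_add_cancel, sub_add_eq_sub_sub] using
      hg.intervalIntegral_add_eq (x - (r + T)) (x - T)
  have hright : ∫ t in x + r..x + (r + T), g t = ∫ t in x..x + T, g t := by
    simpa only [add_assoc] using hg.intervalIntegral_add_eq (x + r) x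
  rw [← integral_add_adjacent_intervals (hint _ (x - r)) (hint (x - r) _),
    ← integral_add_adjacent_intervals (hint (x - r) (x + r)) (hint _ (x + (r + T))),
    ← integral_add_adjacent_intervals (hint (x - T) x) (hint x (x + T)), hleft, hright]
  ring

theorem intervalIntegral_symm_add_nat_mul_period (hg : Periodic g T)
    (hint : ∀ a b, IntervalIntegrable g volume a b) (x r : ℝ) (n : ℕ) :
    ∫ t in x - (r + n * T)..x + (r + n * T), g t =
      (∫ t in x - r..x + r, g t) + n * ∫ t in x - T..x + T, g t := by
  induction n with
  | zero => simp
  | succ n ih =>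
    rw [Nat.cast_succ, add_one_mul, ← add_assoc, hg.intervalIntegral_symm_add_period hint, ih]
    ring

end Function.Periodic

theorem Continuous.hasDerivAt_integral_symm {g : ℝ → ℝ} (hg : Continuous g) (x r : ℝ) :
    HasDerivAt (fun r => ∫ t in x - r..x + r, g t) (g (x + r) + g (x - r)) r := by
  have hsplit : (fun r => ∫ t in x - r..x + r, g t) =
      fun r => (∫ t in (0 : ℝ)..x + r, g t) - ∫ t in (0 : ℝ)..x - r, g t := by
    funext r
    exact (integral_interval_sub_left (hg.intervalIntegrable _ _)
      (hg.intervalIntegrable _ _)).symm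
  rw [hsplit, ← sub_neg_eq_add]
  exact ((hg.integral_hasStrictDerivAt 0 (x + r)).hasDerivAt.comp_const_add x r).sub
    ((hg.integral_hasStrictDerivAt 0 (x - r)).hasDerivAt.comp_const_sub x r)

section avgAbs

variable {f : ℝ → ℝ} {x : ℝ}

theorem avgAbs_of_ne {r : ℝ} (hr : r ≠ 0) :
    avgAbs f x r = (2 * r)⁻¹ * ∫ t in x - r..x + r, |f t| := by
  rw [avgAbs, if_neg hr, one_div]

theorem avgAbs_eq_dslope (hf : Continuous f) (x : ℝ) :
    avgAbs f x = fun r => dslope (fun r => ∫ t in x - r..x + r, |f t|) 0 r / 2 := by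
  funext r
  rcases eq_or_ne r 0 with rfl | hr
  · rw [dslope_same, (hf.abs.hasDerivAt_integral_symm x 0).deriv, avgAbs, if_pos rfl,
      add_zero, sub_zero]
    ring
  · rw [avgAbs_of_ne hr, dslope_of_ne _ hr, slope_def_field, sub_zero, sub_zero, add_zero,
      integral_same, sub_zero]
    field_simp

theorem continuous_avgAbs (hf : Continuous f) (x : ℝ) : Continuous (avgAbs f x) := by
  have hS := hf.abs.hasDerivAt_integral_symm x
  rw [avgAbs_eq_dslope hf, ← continuousOn_univ]
  refine ((continuousOn_dslope univ_mem).2 ⟨?_, (hS 0).differentiableAt⟩).div_const 2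
  exact fun r _ => (hS r).continuousAt.continuousWithinAt

theorem avgAbs_le_iff {r m : ℝ} (hr : 0 < r) :
    avgAbs f x r ≤ m ↔ ∫ t in x - r..x + r, |f t| ≤ 2 * r * m := by
  rw [avgAbs_of_ne hr.ne', inv_mul_le_iff₀ (by positivity)]

theorem maxFunR_eq_iSup_avgAbs (f : ℝ → ℝ) (x : ℝ) :
    maxFunR f x = ⨆ r : {r : ℝ // 0 < r}, avgAbs f x r := by
  rw [maxFunR]
  exact iSup_congr fun r => by rw [avgAbs_of_ne r.2.ne', one_div]

theorem avgAbs_le_of_periodic {T : ℝ} (hT : 0 < T) (hf : Continuous f)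
    (hper : Function.Periodic f T) {m : ℝ} (hm : ∀ s ∈ Icc 0 T, avgAbs f x s ≤ m)
    {r : ℝ} (hr : 0 < r) : avgAbs f x r ≤ m := by
  have hbound : ∀ s ∈ Icc 0 T, ∫ t in x - s..x + s, |f t| ≤ 2 * s * m := by
    rintro s ⟨hs0, hsT⟩
    rcases hs0.eq_or_lt with rfl | hs
    · simp
    · exact (avgAbs_le_iff hs).1 (hm s ⟨hs.le, hsT⟩)
  set n := ⌊r / T⌋₊
  have hnT : n * T ≤ r := (le_div_iff₀ hT).1 (Nat.floor_le (div_nonneg hr.le hT.le))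
  have hrT : r < (n + 1) * T := (div_lt_iff₀ hT).1 (Nat.lt_floor_add_one _)
  have hper_abs : Function.Periodic (fun t => |f t|) T := hper.comp abs
  have hsplit := hper_abs.intervalIntegral_symm_add_nat_mul_period
    (fun a b => hf.abs.intervalIntegrable a b) x (r - n * T) n
  rw [sub_add_cancel] at hsplit
  rw [avgAbs_le_iff hr, hsplit]
  have h₁ := hbound (r - n * T) ⟨by linarith, by linarith⟩
  have h₂ := hbound T ⟨hT.le, le_rfl⟩
  calc (∫ t in x - (r - n * T)..x + (r - n * T), |f t|) + n * ∫ t in x - T..x + T, |f t|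
      ≤ 2 * (r - n * T) * m + n * (2 * T * m) :=
        add_le_add h₁ (mul_le_mul_of_nonneg_left h₂ n.cast_nonneg)
    _ = 2 * r * m := by ring

end avgAbs

theorem iSup_pos_eq_of_forall_le {g : ℝ → ℝ} (hg : Continuous g) {r₀ : ℝ} (hr₀ : 0 ≤ r₀)
    (hle : ∀ r, 0 < r → g r ≤ g r₀) :
    ⨆ r : {r : ℝ // 0 < r}, g r = g r₀ := by
  have : Nonempty {r : ℝ // 0 < r} := ⟨⟨1, one_pos⟩⟩
  have hbdd : BddAbove (range fun r : {r : ℝ // 0 < r} => g r) :=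
    ⟨g r₀, forall_mem_range.2 fun r => hle r r.2⟩
  refine le_antisymm (ciSup_le fun r => hle r r.2) ?_
  refine le_of_tendsto (hg.continuousAt.tendsto.mono_left (nhdsWithin_le_nhds (s := Ioi r₀))) ?_
  filter_upwards [self_mem_nhdsWithin] with s (hs : r₀ < s)
  exact le_ciSup hbdd ⟨s, hr₀.trans_lt hs⟩

/-- For a continuous `T`-periodic function the maximal function is
attained at some radius `r ∈ [0, T]`. -/
theorem maximal_attained_on_period
    (T : ℝ) (hT : 0 < T) (f : ℝ → ℝ) (hf : Continuous f)
    (hper : ∀ t, f (t + T) = f t) (x : ℝ) :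
    ∃ r ∈ Set.Icc (0 : ℝ) T, maxFunR f x = avgAbs f x r := by
  have hcont := continuous_avgAbs hf x
  obtain ⟨r₀, hr₀, hmax⟩ :=
    isCompact_Icc.exists_isMaxOn (nonempty_Icc.2 hT.le) hcont.continuousOn
  refine ⟨r₀, hr₀, ?_⟩
  rw [maxFunR_eq_iSup_avgAbs]
  exact iSup_pos_eq_of_forall_le hcont hr₀.1 fun r hr =>
    avgAbs_le_of_periodic hT hf hper (fun s hs => hmax hs) hr
end

section
/- Let $(X,d,\mu)$ be a metric measure space in which every nonempty open set has positive measure and every bounded set has finite measure, let $\alpha\colon X\to[0,1]$, and let $f\in C^{0,\alpha(\cdot)}(X)$ with $\sup_{u\neq v}\frac{|f(u)-f(v)|}{d(u,v)^{\alpha(u)}}\leq 1$. Let $x,y\in X$ be distinct with $a=d(x,y)\leq 1$ and let $0<r\leq a$. Then $\frac{1}{\mu(B(x,r))}\int_{B(x,r)}|f|\,d\mu-\frac{1}{\mu(B(y,r))}\int_{B(y,r)}|f|\,d\mu\leq 4\,a^{\alpha(x)}$. -/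
open MeasureTheory Metric Set Filter

/-! By the first moment method the difference of the two averages is at most `|f z| - |f w|`
for some `z ∈ B(x,r)` and `w ∈ B(y,r)`. Both points are compared with `x`, where the Hölder
condition is anchored with exponent `α x`: `d(x,z) ≤ a` and `d(x,w) ≤ 2a`, so
`|f z| - |f w| ≤ a^{α(x)} + (2a)^{α(x)} ≤ 3 a^{α(x)}`. -/

lemma MemVarHolder.integrableOn_abs {X : Type*} [MetricSpace X] [MeasurableSpace X]
    [OpensMeasurableSpace X] {μ : Measure X} {α f : X → ℝ} (hf : MemVarHolder α f)
    {s : Set X} (hs : μ s ≠ ⊤) : IntegrableOn (fun z => |f z|) s μ := by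
  obtain ⟨hcont, ⟨M, hM⟩, -⟩ := hf
  refine Measure.integrableOn_of_bounded (M := M) hs hcont.abs.aestronglyMeasurable
    (Eventually.of_forall fun z => ?_)
  simpa only [Real.norm_eq_abs, abs_abs] using hM ⟨z, rfl⟩

lemma abs_sub_le_rpow_of_dist_le {X : Type*} [MetricSpace X] {α f : X → ℝ} {u v : X} {ρ : ℝ}
    (hsemi : ∀ w, u ≠ w → |f u - f w| ≤ dist u w ^ α u) (hα : 0 ≤ α u)
    (huv : dist u v ≤ ρ) : |f u - f v| ≤ ρ ^ α u := by
  rcases eq_or_ne u v with rfl | h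
  · rw [sub_self, abs_zero]
    exact Real.rpow_nonneg (dist_nonneg.trans huv) _
  · exact (hsemi v h).trans (Real.rpow_le_rpow dist_nonneg huv hα)

lemma Real.two_mul_rpow_le {a p : ℝ} (ha : 0 ≤ a) (hp : p ≤ 1) :
    (2 * a) ^ p ≤ 2 * a ^ p := by
  rw [Real.mul_rpow zero_le_two ha]
  gcongr
  simpa using Real.rpow_le_rpow_of_exponent_le one_le_two hp

theorem averages_diff_small_radius_x_general
    {X : Type*} [MetricSpace X] [MeasurableSpace X] [BorelSpace X] (μ : Measure X)
    (hopen : ∀ U : Set X, IsOpen U → U.Nonempty → 0 < μ U)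
    (hbdd : ∀ s : Set X, Bornology.IsBounded s → μ s < ⊤)
    (α : X → ℝ) (hα : ∀ x, α x ∈ Set.Icc (0 : ℝ) 1)
    (f : X → ℝ) (hf : MemVarHolder α f)
    (hsemi : ∀ u v : X, u ≠ v → |f u - f v| ≤ dist u v ^ α u)
    (x y : X)
    (r : ℝ) (hr0 : 0 < r) (hra : r ≤ dist x y) :
    (⨍ z in ball x r, |f z| ∂μ) - (⨍ z in ball y r, |f z| ∂μ) ≤ 4 * dist x y ^ α x := by
  set a := dist x y
  obtain ⟨hα₀, hα₁⟩ := hα x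
  have hpos : ∀ c, μ (ball c r) ≠ 0 := fun c => (hopen _ isOpen_ball ⟨c, mem_ball_self hr0⟩).ne'
  have hfin : ∀ c, μ (ball c r) ≠ ⊤ := fun c => (hbdd _ isBounded_ball).ne
  obtain ⟨z, hz, hz_avg⟩ := exists_setAverage_le (hpos x) (hfin x) (hf.integrableOn_abs (hfin x))
  obtain ⟨w, hw, hw_avg⟩ := exists_le_setAverage (hpos y) (hfin y) (hf.integrableOn_abs (hfin y))
  have hxz : |f x - f z| ≤ a ^ α x :=
    abs_sub_le_rpow_of_dist_le (hsemi x) hα₀ ((mem_ball'.1 hz).le.trans hra)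
  have hxw : |f x - f w| ≤ 2 * a ^ α x := by
    have hdist : dist x w ≤ 2 * a := by
      linarith [dist_triangle x y w, (mem_ball'.1 hw).le.trans hra]
    exact (abs_sub_le_rpow_of_dist_le (hsemi x) hα₀ hdist).trans
      (Real.two_mul_rpow_le dist_nonneg hα₁)
  have hA : 0 ≤ a ^ α x := Real.rpow_nonneg dist_nonneg _
  linarith [abs_sub_abs_le_abs_sub (f z) (f x), abs_sub_abs_le_abs_sub (f x) (f w),
    abs_sub_comm (f x) (f z)]

/-- Subcase 1.1. Difference of ball averages for a small radius `r ≤ a`,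
estimated by `4 a^{α(x)}`. -/
theorem averages_diff_small_radius_x
    {X : Type*} [MetricSpace X] [MeasurableSpace X] [BorelSpace X] (μ : Measure X)
    (hopen : ∀ U : Set X, IsOpen U → U.Nonempty → 0 < μ U)
    (hbdd : ∀ s : Set X, Bornology.IsBounded s → μ s < ⊤)
    (α : X → ℝ) (hα : ∀ x, α x ∈ Set.Icc (0 : ℝ) 1)
    (f : X → ℝ) (hf : MemVarHolder α f)
    (hsemi : ∀ u v : X, u ≠ v → |f u - f v| ≤ dist u v ^ α u)
    (x y : X) (hxy : x ≠ y) (hd : dist x y ≤ 1)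
    (r : ℝ) (hr0 : 0 < r) (hra : r ≤ dist x y) :
    (⨍ z in ball x r, |f z| ∂μ) - (⨍ z in ball y r, |f z| ∂μ) ≤ 4 * dist x y ^ α x :=
  averages_diff_small_radius_x_general μ hopen hbdd α hα f hf hsemi x y r hr0 hra
end

section
/- Let $(X,d,\mu)$ be a metric measure space in which every nonempty open set has positive measure and every bounded set has finite measure, satisfying the $\delta$-annular decay property for some $\delta\in(0,1]$ with constant $K\geq 1$, and let $\alpha\colon X\to[0,\delta]$. Let $x,y\in X$ with $a=d(x,y)>0$ and let $r>a$. If $g\in L^{1}(B(x,r+2a))$ satisfies $|g|\leq\min\{1,\,2(3r)^{\alpha(x)}\}$ almost everywhere on $B(x,r+2a)$, then $\frac{1}{\mu(B(x,r))}\int_{B(x,r)}|g|\,d\mu-\frac{1}{\mu(B(y,r+a))}\int_{B(y,r+a)}|g|\,d\mu\leq 6K\,2^{\delta}\,a^{\alpha(x)}$. -/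
/-!
With `a = d(x, y)` we have `B(x, r) ⊆ B(y, r + a) ⊆ B(x, r + 2a)`. For `0 ≤ |g| ≤ M`, passing
from the larger ball to the smaller one raises the average by at most `M` times the relative
measure of `B(y, r + a) \ B(x, r)`. That shell lies in the annulus `B(y, r + a) \ B(y, r - a)`,
whose relative measure annular decay bounds by `K (2a / (r + a))^δ`. Taking `M = 2 (3r)^α`,
the factor `r` is absorbed because `3r · a / (r + a) ≤ 3a` and `α ≤ δ ≤ 1`.
-/

open MeasureTheory Metric Set Filter

section NestedAverages

variable {Ω : Type*} [MeasurableSpace Ω] {μ : Measure Ω} {s t : Set Ω} {f : Ω → ℝ} {M : ℝ}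

-- When `μ t = 0` the right-hand side is `0`, by the junk value of division.
theorem setAverage_sub_setAverage_le_of_subset (hst : s ⊆ t) (ht : μ t ≠ ⊤)
    (hf : IntegrableOn f t μ) (hf0 : 0 ≤ᵐ[μ.restrict t] f)
    (hfM : ∀ᵐ z ∂μ.restrict s, f z ≤ M) (hM : 0 ≤ M) :
    (⨍ z in s, f z ∂μ) - ⨍ z in t, f z ∂μ ≤ M * ((μ.real t - μ.real s) / μ.real t) := by
  have hs : μ s ≠ ⊤ := measure_ne_top_of_subset hst ht
  have hμst : μ.real s ≤ μ.real t := measureReal_mono hst ht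
  have hint_st : ∫ z in s, f z ∂μ ≤ ∫ z in t, f z ∂μ :=
    setIntegral_mono_set hf hf0 hst.eventuallyLE
  have hint_s : ∫ z in s, f z ∂μ ≤ M * μ.real s := by
    calc ∫ z in s, f z ∂μ ≤ ∫ _ in s, M ∂μ :=
          integral_mono_ae (hf.mono_set hst) (integrableOn_const hs) hfM
      _ = M * μ.real s := by rw [setIntegral_const, smul_eq_mul, mul_comm]
  rw [setAverage_eq, setAverage_eq, smul_eq_mul, smul_eq_mul]
  rcases (measureReal_nonneg : 0 ≤ μ.real s).eq_or_lt with hs0 | hs0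
  · rw [← hs0, inv_zero, zero_mul, zero_sub, sub_zero]
    have hav_t : 0 ≤ (μ.real t)⁻¹ * ∫ z in t, f z ∂μ :=
      mul_nonneg (inv_nonneg.2 measureReal_nonneg) (integral_nonneg_of_ae hf0)
    have hrhs : 0 ≤ M * (μ.real t / μ.real t) := by positivity
    linarith
  · have ht0 : 0 < μ.real t := hs0.trans_le hμst
    calc (μ.real s)⁻¹ * ∫ z in s, f z ∂μ - (μ.real t)⁻¹ * ∫ z in t, f z ∂μ
        ≤ (μ.real s)⁻¹ * ∫ z in s, f z ∂μ - (μ.real t)⁻¹ * ∫ z in s, f z ∂μ := by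
          gcongr
      _ = (∫ z in s, f z ∂μ) * (μ.real t - μ.real s) / (μ.real s * μ.real t) := by
          field_simp
      _ ≤ (M * μ.real s) * (μ.real t - μ.real s) / (μ.real s * μ.real t) := by
          gcongr
      _ = M * ((μ.real t - μ.real s) / μ.real t) := by field_simp

end NestedAverages

section AnnularDecay

variable {X : Type*} [MetricSpace X] [MeasurableSpace X]

def AnnularDecay (μ : Measure X) (K δ : ℝ) : Prop :=
  ∀ (x : X) (r ε : ℝ), 0 < r → 0 < ε → ε < 1 →
    μ (ball x r \ ball x (r * (1 - ε))) ≤ ENNReal.ofReal (K * ε ^ δ) * μ (ball x r)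

theorem AnnularDecay.measureReal_ball_sub_measureReal_ball_le {μ : Measure X} {K δ : ℝ}
    (h : AnnularDecay μ K δ) (hK : 0 ≤ K) {y : X} {ρ R : ℝ} (hρ : 0 < ρ) (hρR : ρ < R)
    (hR : μ (ball y R) ≠ ⊤) :
    μ.real (ball y R) - μ.real (ball y ρ) ≤ K * ((R - ρ) / R) ^ δ * μ.real (ball y R) := by
  have hR0 : 0 < R := hρ.trans hρR
  have hε0 : 0 < (R - ρ) / R := div_pos (by linarith) hR0
  have hε1 : (R - ρ) / R < 1 := (div_lt_one hR0).2 (by linarith)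
  have hannulus := h y R _ hR0 hε0 hε1
  rw [show R * (1 - (R - ρ) / R) = ρ by field_simp; ring] at hannulus
  calc μ.real (ball y R) - μ.real (ball y ρ)
      ≤ μ.real (ball y R \ ball y ρ) :=
        le_measureReal_sdiff (measure_ne_top_of_subset (ball_subset_ball hρR.le) hR)
    _ ≤ (ENNReal.ofReal (K * ((R - ρ) / R) ^ δ) * μ (ball y R)).toReal :=
        ENNReal.toReal_mono (ENNReal.mul_ne_top ENNReal.ofReal_ne_top hR) hannulus
    _ = K * ((R - ρ) / R) ^ δ * μ.real (ball y R) := by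
        rw [ENNReal.toReal_mul, ENNReal.toReal_ofReal (by positivity), measureReal_def]

end AnnularDecay

theorem three_mul_rpow_mul_two_mul_div_add_rpow_le {a r α δ : ℝ} (ha : 0 < a) (hr : 0 ≤ r)
    (hα : 0 ≤ α) (hαδ : α ≤ δ) (hδ : δ ≤ 1) :
    (3 * r) ^ α * (2 * a / (r + a)) ^ δ ≤ 3 * 2 ^ δ * a ^ α := by
  set t := a / (r + a)
  have ht0 : 0 < t := by positivity
  have ht1 : t ≤ 1 := (div_le_one (by linarith)).2 (by linarith)
  have hrt : 3 * r * t ≤ 3 * a := by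
    rw [← mul_div_assoc, div_le_iff₀ (by linarith)]
    nlinarith
  calc (3 * r) ^ α * (2 * a / (r + a)) ^ δ = 2 ^ δ * ((3 * r) ^ α * t ^ δ) := by
        rw [mul_div_assoc, Real.mul_rpow (by norm_num) ht0.le]; ring
    _ ≤ 2 ^ δ * ((3 * r) ^ α * t ^ α) := by
        gcongr 2 ^ δ * (_ * ?_)
        exact Real.rpow_le_rpow_of_exponent_ge ht0 ht1 hαδ
    _ = 2 ^ δ * (3 * r * t) ^ α := by rw [Real.mul_rpow (by positivity) ht0.le]
    _ ≤ 2 ^ δ * (3 ^ α * a ^ α) := by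
        rw [← Real.mul_rpow (by norm_num) ha.le]
        gcongr
    _ ≤ 2 ^ δ * (3 * a ^ α) := by
        gcongr
        exact Real.rpow_le_self_of_one_le (by norm_num) (hαδ.trans hδ)
    _ = 3 * 2 ^ δ * a ^ α := by ring

theorem bounded_implies_average_estimate_x_general
    {X : Type*} [MetricSpace X] [MeasurableSpace X] (μ : Measure X)
    (hbdd : ∀ s : Set X, Bornology.IsBounded s → μ s < ⊤)
    (δ K : ℝ) (hδ : δ ∈ Set.Ioc (0 : ℝ) 1) (hK : 1 ≤ K)
    (hann : ∀ (x : X) (r ε : ℝ), 0 < r → 0 < ε → ε < 1 →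
      μ (ball x r \ ball x (r * (1 - ε))) ≤ ENNReal.ofReal (K * ε ^ δ) * μ (ball x r))
    (α : X → ℝ) (hα : ∀ x, α x ∈ Set.Icc (0 : ℝ) δ)
    (x y : X) (ha : 0 < dist x y) (r : ℝ) (hr : dist x y < r)
    (g : X → ℝ) (hg : IntegrableOn g (ball x (r + 2 * dist x y)) μ)
    (hgb : ∀ᵐ z ∂(μ.restrict (ball x (r + 2 * dist x y))),
      |g z| ≤ min 1 (2 * (3 * r) ^ α x)) :
    (⨍ z in ball x r, |g z| ∂μ) - (⨍ z in ball y (r + dist x y), |g z| ∂μ) ≤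
      6 * K * 2 ^ δ * dist x y ^ α x := by
  set a := dist x y
  have hr0 : 0 < r := ha.trans hr
  have hxy : ball x r ⊆ ball y (r + a) := ball_subset_ball' (by linarith)
  have hyx : ball y (r + a) ⊆ ball x (r + 2 * a) :=
    ball_subset_ball' (by rw [dist_comm]; linarith)
  have hfin : μ (ball y (r + a)) ≠ ⊤ := (hbdd _ isBounded_ball).ne
  have havg := setAverage_sub_setAverage_le_of_subset (f := fun z => |g z|)
    (M := 2 * (3 * r) ^ α x) hxy hfin (hg.mono_set hyx).abs
    (Eventually.of_forall fun z => abs_nonneg (g z))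
    (ae_restrict_of_ae_restrict_of_subset (hxy.trans hyx)
      (hgb.mono fun z hz => hz.trans (min_le_right _ _))) (by positivity)
  have hshell := (show AnnularDecay μ K δ from hann).measureReal_ball_sub_measureReal_ball_le
    (by linarith) (sub_pos.2 hr) (by linarith : r - a < r + a) hfin
  rw [show r + a - (r - a) = 2 * a by ring] at hshell
  have hinner : μ.real (ball y (r - a)) ≤ μ.real (ball x r) :=
    measureReal_mono (ball_subset_ball' (by rw [dist_comm]; linarith))
      (hbdd _ isBounded_ball).ne
  have hratio : (μ.real (ball y (r + a)) - μ.real (ball x r)) / μ.real (ball y (r + a)) ≤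
      K * (2 * a / (r + a)) ^ δ :=
    div_le_of_le_mul₀ measureReal_nonneg (by positivity) (by linarith)
  calc _ ≤ 2 * (3 * r) ^ α x * (K * (2 * a / (r + a)) ^ δ) := havg.trans (by gcongr)
    _ = 2 * K * ((3 * r) ^ α x * (2 * a / (r + a)) ^ δ) := by ring
    _ ≤ 2 * K * (3 * 2 ^ δ * a ^ α x) := by
        gcongr 2 * K * ?_
        exact three_mul_rpow_mul_two_mul_div_add_rpow_le ha hr0.le (hα x).1 (hα x).2 hδ.2
    _ = 6 * K * 2 ^ δ * a ^ α x := by ring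

/-- Step 2.1. Bounded functions on `B(x, r+2a)` satisfy the average
difference estimate `6 K 2^δ a^{α(x)}`. -/
theorem bounded_implies_average_estimate_x
    {X : Type*} [MetricSpace X] [MeasurableSpace X] [BorelSpace X] (μ : Measure X)
    (hopen : ∀ U : Set X, IsOpen U → U.Nonempty → 0 < μ U)
    (hbdd : ∀ s : Set X, Bornology.IsBounded s → μ s < ⊤)
    (δ K : ℝ) (hδ : δ ∈ Set.Ioc (0 : ℝ) 1) (hK : 1 ≤ K)
    (hann : ∀ (x : X) (r ε : ℝ), 0 < r → 0 < ε → ε < 1 →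
      μ (ball x r \ ball x (r * (1 - ε))) ≤ ENNReal.ofReal (K * ε ^ δ) * μ (ball x r))
    (α : X → ℝ) (hα : ∀ x, α x ∈ Set.Icc (0 : ℝ) δ)
    (x y : X) (ha : 0 < dist x y) (r : ℝ) (hr : dist x y < r)
    (g : X → ℝ) (hg : IntegrableOn g (ball x (r + 2 * dist x y)) μ)
    (hgb : ∀ᵐ z ∂(μ.restrict (ball x (r + 2 * dist x y))),
      |g z| ≤ min 1 (2 * (3 * r) ^ α x)) :
    (⨍ z in ball x r, |g z| ∂μ) - (⨍ z in ball y (r + dist x y), |g z| ∂μ) ≤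
      6 * K * 2 ^ δ * dist x y ^ α x :=
  bounded_implies_average_estimate_x_general μ hbdd δ K hδ hK hann α hα x y ha r hr g hg hgb
end

section
/- Let $f\colon\mathbb{R}\to\mathbb{R}$ be the continuous $2$-periodic function with $f(x)=|x|$ for $x\in[-1,1]$, and for $n\in\mathbb{N}$ set $f_n(x)=f(x)-\tfrac1n$. Then for all sufficiently large $n$, $Mf_n\big(\tfrac12\big)=1-\sqrt{-\tfrac{1}{n^{2}}+\tfrac{1}{n}+\tfrac14}$. -/
/-!
Put `c = 1/n` and `q = √(1/4 + c - c²)`. Folding the window at `1/2` turns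
`∫_{1/2-r}^{1/2+r} |f - c|` into `∫_0^r h` with `h u = |f (1/2 + u) - c| + |f (1/2 - u) - c|`.
Since `f` is even and `2`-periodic, `h` is `1`-periodic, and on `[0, 1]` it is the plateau
`1 - 2c` carrying a tent of height `2c` centred at `1/2`. The running integral of `h - 2(1 - q)`
decreases on `[0, 1 - q]`, increases on `[1 - q, q]`, decreases on `[q, 1]`, and vanishes at `q`;
so `∫_0^r h ≤ 2(1 - q) r` on `[0, 1]`, hence for all `r > 0` by periodicity, with equality at
`r = q`. The maximal average is therefore `1 - q`.
-/

open MeasureTheory Metric Set Filter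

open Function intervalIntegral

theorem Function.Periodic.eq_of_eqOn_Ico {f g : ℝ → ℝ} {T a : ℝ} (hf : Periodic f T)
    (hg : Periodic g T) (hT : 0 < T) (h : EqOn f g (Ico a (a + T))) : f = g := by
  funext x
  rw [← hf.sub_zsmul_eq (toIcoDiv hT a x), ← hg.sub_zsmul_eq (toIcoDiv hT a x),
    self_sub_toIcoDiv_zsmul]
  exact h (toIcoMod_mem_Ico hT a x)

theorem Function.Periodic.periodic_fold_quarter {g : ℝ → ℝ} {T : ℝ} (hg : Periodic g T)
    (he : Function.Even g) : Periodic (fun u => g (T / 4 + u) + g (T / 4 - u)) (T / 2) := by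
  intro u
  have h₁ : g (T / 4 + (u + T / 2)) = g (T / 4 - u) := by
    rw [← hg.sub_eq, show T / 4 + (u + T / 2) - T = -(T / 4 - u) by ring, he]
  have h₂ : g (T / 4 - (u + T / 2)) = g (T / 4 + u) := by
    rw [show T / 4 - (u + T / 2) = -(T / 4 + u) by ring, he]
  show g (T / 4 + (u + T / 2)) + g (T / 4 - (u + T / 2)) = _
  rw [h₁, h₂, add_comm]

theorem integral_sub_add_eq_integral_fold {g : ℝ → ℝ} (hg : Continuous g) (x r : ℝ) :
    ∫ t in x - r..x + r, g t = ∫ u in 0..r, (g (x + u) + g (x - u)) := by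
  rw [integral_add ((by fun_prop : Continuous fun u => g (x + u)).intervalIntegrable _ _)
      ((by fun_prop : Continuous fun u => g (x - u)).intervalIntegrable _ _),
    integral_comp_add_left, integral_comp_sub_left, add_zero, sub_zero,
    ← integral_add_adjacent_intervals (hg.intervalIntegrable _ x) (hg.intervalIntegrable x _),
    add_comm]

theorem Function.Periodic.intervalIntegral_le_mul_of_le_on_period {g : ℝ → ℝ} {T K r : ℝ}
    (hg : Periodic g T) (hT : 0 < T) (h_int : IntervalIntegrable g volume 0 T)
    (hle : ∀ s ∈ Icc 0 T, ∫ x in 0..s, g x ≤ K * s) (hr : 0 ≤ r) :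
    ∫ x in 0..r, g x ≤ K * r := by
  have hi := hg.intervalIntegrable₀ hT.ne' h_int
  set n := ⌊r / T⌋
  set s := Int.fract (r / T) * T
  have hn : (0 : ℝ) ≤ n := by positivity
  have hs : s ∈ Icc 0 T := Ico_subset_Icc_self (Int.fract_div_mul_self_mem_Ico T r hT)
  have hsplit : ∫ x in 0..r, g x = (∫ x in 0..s, g x) + n • ∫ x in 0..T, g x := by
    rw [← Int.fract_div_mul_self_add_zsmul_eq T r hT.ne',
      ← integral_add_adjacent_intervals (hi 0 s) (hi _ _), hg.intervalIntegral_add_zsmul_eq n s hi,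
      hg.intervalIntegral_add_eq s 0, zero_add]
  calc ∫ x in 0..r, g x = (∫ x in 0..s, g x) + n * ∫ x in 0..T, g x := by
        rw [hsplit, zsmul_eq_mul]
    _ ≤ K * s + n * (K * T) := by
        gcongr
        · exact hle s hs
        · exact hle T ⟨hT.le, le_rfl⟩
    _ = K * r := by
        rw [← Int.fract_div_mul_self_add_zsmul_eq T r hT.ne', zsmul_eq_mul]; ring

theorem integral_nonpos_of_sign_pattern {φ : ℝ → ℝ} {a p q b r : ℝ} (hφ : Continuous φ)
    (h₁ : ∀ u ∈ Icc a p, φ u ≤ 0) (h₂ : ∀ u ∈ Icc p q, 0 ≤ φ u) (h₃ : ∀ u ∈ Icc q b, φ u ≤ 0)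
    (hq : ∫ u in a..q, φ u = 0) (hr : r ∈ Icc a b) : ∫ u in a..r, φ u ≤ 0 := by
  have hi : ∀ s t, IntervalIntegrable φ volume s t := hφ.intervalIntegrable
  have nonpos {s t : ℝ} (hst : s ≤ t) (h : ∀ u ∈ Icc s t, φ u ≤ 0) : ∫ u in s..t, φ u ≤ 0 := by
    simpa using integral_mono_on hst (hi s t) intervalIntegrable_const h
  rcases le_or_gt r p with hrp | hpr
  · exact nonpos hr.1 fun u hu => h₁ u ⟨hu.1, hu.2.trans hrp⟩
  rcases le_or_gt r q with hrq | hqr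
  · have : 0 ≤ ∫ u in r..q, φ u :=
      integral_nonneg hrq fun u hu => h₂ u ⟨hpr.le.trans hu.1, hu.2⟩
    linarith [integral_add_adjacent_intervals (hi a r) (hi r q)]
  · have := nonpos hqr.le fun u hu => h₃ u ⟨hu.1, hu.2.trans hr.2⟩
    linarith [integral_add_adjacent_intervals (hi a q) (hi q r)]

noncomputable def tentProfile (c u : ℝ) : ℝ := 1 - 2 * c + 2 * max (c - |u - 1 / 2|) 0

theorem continuous_tentProfile (c : ℝ) : Continuous (tentProfile c) := by
  unfold tentProfile; fun_prop

theorem integral_tentProfile_of_mem_Icc {c r : ℝ} (hc : c ≤ 1 / 2)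
    (hr : r ∈ Icc (1 / 2) (1 / 2 + c)) :
    ∫ u in 0..r, tentProfile c u = (1 / 2 - c) ^ 2 + 2 * r - r ^ 2 - 1 / 2 := by
  have hc₀ : 0 ≤ c := by linarith [hr.1, hr.2]
  have hi : ∀ a b, IntervalIntegrable (tentProfile c) volume a b :=
    (continuous_tentProfile c).intervalIntegrable
  have e₁ : ∫ u in 0..1 / 2 - c, tentProfile c u = ∫ u in 0..1 / 2 - c, (1 - 2 * c) := by
    refine integral_congr fun u hu => ?_
    rw [uIcc_of_le (by linarith)] at hu
    simp only [tentProfile, abs_of_nonpos (by linarith [hu.2] : u - 1 / 2 ≤ 0)]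
    rw [max_eq_right (by linarith [hu.2])]; ring
  have e₂ : ∫ u in 1 / 2 - c..1 / 2, tentProfile c u = ∫ u in 1 / 2 - c..1 / 2, 2 * u := by
    refine integral_congr fun u hu => ?_
    rw [uIcc_of_le (by linarith [hr.2])] at hu
    simp only [tentProfile, abs_of_nonpos (by linarith [hu.2] : u - 1 / 2 ≤ 0)]
    rw [max_eq_left (by linarith [hu.1])]; ring
  have e₃ : ∫ u in 1 / 2..r, tentProfile c u = ∫ u in 1 / 2..r, (2 - 2 * u) := by
    refine integral_congr fun u hu => ?_
    rw [uIcc_of_le hr.1] at hu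
    simp only [tentProfile, abs_of_nonneg (by linarith [hu.1] : 0 ≤ u - 1 / 2)]
    rw [max_eq_left (by linarith [hu.2, hr.2])]; ring
  rw [← integral_add_adjacent_intervals (hi 0 (1 / 2 - c)) (hi _ r),
    ← integral_add_adjacent_intervals (hi (1 / 2 - c) (1 / 2)) (hi _ r), e₁, e₂, e₃]
  rw [intervalIntegral.integral_sub intervalIntegrable_const
      ((continuous_const_mul 2).intervalIntegrable _ _),
    intervalIntegral.integral_const_mul, intervalIntegral.integral_const_mul]
  simp only [intervalIntegral.integral_const, integral_id, smul_eq_mul]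
  ring

theorem sqrt_mem_Icc_half {c : ℝ} (hc : c ∈ Icc 0 1) :
    √(1 / 4 + c - c ^ 2) ∈ Icc (1 / 2) (1 / 2 + c) := by
  refine ⟨Real.le_sqrt_of_sq_le (by nlinarith [hc.1, hc.2]), ?_⟩
  rw [Real.sqrt_le_left (by linarith [hc.1])]
  nlinarith [hc.1]

theorem integral_tentProfile_sqrt {c : ℝ} (hc : c ∈ Icc 0 (1 / 2)) :
    ∫ u in 0..√(1 / 4 + c - c ^ 2), tentProfile c u =
      2 * (1 - √(1 / 4 + c - c ^ 2)) * √(1 / 4 + c - c ^ 2) := by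
  have hq := sqrt_mem_Icc_half ⟨hc.1, hc.2.trans (by norm_num)⟩
  rw [integral_tentProfile_of_mem_Icc hc.2 hq]
  linear_combination Real.sq_sqrt (by nlinarith [hc.1, hc.2] : 0 ≤ 1 / 4 + c - c ^ 2)

theorem integral_tentProfile_le {c r : ℝ} (hc : c ∈ Icc 0 (1 / 2)) (hr : r ∈ Icc 0 1) :
    ∫ u in 0..r, tentProfile c u ≤ 2 * (1 - √(1 / 4 + c - c ^ 2)) * r := by
  set q := √(1 / 4 + c - c ^ 2)
  have hq : q ∈ Icc (1 / 2) (1 / 2 + c) := sqrt_mem_Icc_half ⟨hc.1, hc.2.trans (by norm_num)⟩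
  have below {u : ℝ} (hu : q - 1 / 2 ≤ |u - 1 / 2|) : tentProfile c u - 2 * (1 - q) ≤ 0 := by
    simp only [tentProfile]
    linarith [max_le (by linarith : c - |u - 1 / 2| ≤ 1 / 2 + c - q)
      (by linarith [hq.2] : 0 ≤ 1 / 2 + c - q)]
  have above {u : ℝ} (hu : |u - 1 / 2| ≤ q - 1 / 2) : 0 ≤ tentProfile c u - 2 * (1 - q) := by
    simp only [tentProfile]
    linarith [le_max_left (c - |u - 1 / 2|) 0]
  have key : ∫ u in 0..r, (tentProfile c u - 2 * (1 - q)) ≤ 0 := by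
    refine integral_nonpos_of_sign_pattern (p := 1 - q) (q := q)
      ((continuous_tentProfile c).sub continuous_const) (fun u hu => below ?_)
      (fun u hu => above ?_) (fun u hu => below ?_) ?_ hr
    · exact le_abs.2 (Or.inr (by linarith [hu.2]))
    · exact abs_le.2 ⟨by linarith [hu.1], by linarith [hu.2]⟩
    · exact le_abs.2 (Or.inl (by linarith [hu.1]))
    · rw [intervalIntegral.integral_sub ((continuous_tentProfile c).intervalIntegrable _ _)
        intervalIntegrable_const, integral_tentProfile_sqrt hc, intervalIntegral.integral_const,
        smul_eq_mul]
      ring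
  rw [intervalIntegral.integral_sub ((continuous_tentProfile c).intervalIntegrable _ _)
    intervalIntegrable_const, intervalIntegral.integral_const, smul_eq_mul] at key
  linarith

theorem maxFunR_eq_of_integral_le_of_eq {g : ℝ → ℝ} {x M r₀ : ℝ}
    (hle : ∀ r, 0 < r → ∫ t in x - r..x + r, |g t| ≤ 2 * M * r) (hr₀ : 0 < r₀)
    (heq : ∫ t in x - r₀..x + r₀, |g t| = 2 * M * r₀) : maxFunR g x = M := by
  have avg_le (r : {r : ℝ // 0 < r}) : 1 / (2 * r.1) * ∫ t in x - r.1..x + r.1, |g t| ≤ M := by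
    rw [one_div_mul_eq_div, div_le_iff₀ (by linarith [r.2])]
    linarith [hle r.1 r.2]
  refine le_antisymm (ciSup_le avg_le) (le_ciSup_of_le ⟨M, forall_mem_range.2 avg_le⟩ ⟨r₀, hr₀⟩ ?_)
  rw [heq]
  exact le_of_eq (by field_simp)

section TriangleWave

variable {f : ℝ → ℝ} (hper : ∀ t, f (t + 2) = f t) (hval : ∀ x ∈ Icc (-1 : ℝ) 1, f x = |x|)
include hper hval

theorem triangleWave_even : Function.Even f := by
  have h := (Periodic.const_sub hper 0).eq_of_eqOn_Ico hper two_pos (a := -1) fun t ht => by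
    have ht' : t ∈ Icc (-1 : ℝ) 1 := ⟨ht.1, by linarith [ht.2]⟩
    simp only [zero_sub]
    rw [hval t ht', hval (-t) ⟨by linarith [ht'.2], by linarith [ht'.1]⟩, abs_neg]
  intro t
  simpa using congrFun h t

theorem triangleWave_half_add {u : ℝ} (hu : u ∈ Icc (0 : ℝ) 1) :
    f (1 / 2 + u) = 1 - |u - 1 / 2| := by
  rcases le_total u (1 / 2) with h | h
  · rw [hval _ ⟨by linarith [hu.1], by linarith⟩, abs_of_nonneg (by linarith [hu.1]),
      abs_of_nonpos (by linarith)]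
    ring
  · rw [show 1 / 2 + u = u - 3 / 2 + 2 by ring, hper, hval _ ⟨by linarith, by linarith [hu.2]⟩,
      abs_of_nonpos (by linarith [hu.2]), abs_of_nonneg (by linarith)]
    ring

theorem triangleWave_fold_eq_tentProfile {c u : ℝ} (hc : c ≤ 1 / 2) (hu : u ∈ Icc (0 : ℝ) 1) :
    |f (1 / 2 + u) - c| + |f (1 / 2 - u) - c| = tentProfile c u := by
  have hd : |u - 1 / 2| ≤ 1 / 2 := abs_le.2 ⟨by linarith [hu.1], by linarith [hu.2]⟩
  rw [triangleWave_half_add hper hval hu,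
    hval _ ⟨by linarith [hu.2], by linarith [hu.1]⟩, abs_sub_comm (1 / 2), tentProfile,
    abs_of_nonneg (by linarith : 0 ≤ 1 - |u - 1 / 2| - c)]
  generalize |u - 1 / 2| = d
  rcases le_total c d with h | h
  · rw [abs_of_nonneg (by linarith), max_eq_right (by linarith)]; ring
  · rw [abs_of_nonpos (by linarith), max_eq_left (by linarith)]; ring

theorem maxFunR_triangleWave_sub_const_at_half (hf : Continuous f) {c : ℝ}
    (hc : c ∈ Icc 0 (1 / 2)) :
    maxFunR (fun x => f x - c) (1 / 2) = 1 - √(1 / 4 + c - c ^ 2) := by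
  set q := √(1 / 4 + c - c ^ 2)
  have hq : q ∈ Icc (1 / 2) (1 / 2 + c) := sqrt_mem_Icc_half ⟨hc.1, hc.2.trans (by norm_num)⟩
  have hg : Continuous fun t => |f t - c| := by fun_prop
  have hfold := integral_sub_add_eq_integral_fold hg (1 / 2)
  have hprofile {r : ℝ} (hr : r ∈ Icc (0 : ℝ) 1) :
      ∫ u in 0..r, (|f (1 / 2 + u) - c| + |f (1 / 2 - u) - c|) = ∫ u in 0..r, tentProfile c u :=
    integral_congr fun u hu => triangleWave_fold_eq_tentProfile hper hval hc.2 <| by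
      rw [uIcc_of_le hr.1] at hu; exact ⟨hu.1, hu.2.trans hr.2⟩
  have hperiodic : Periodic (fun u => |f (1 / 2 + u) - c| + |f (1 / 2 - u) - c|) 1 := by
    have := ((show Periodic f 2 from hper).comp fun y => |y - c|).periodic_fold_quarter
      (fun t => by simp [triangleWave_even hper hval t])
    norm_num at this
    exact this
  have hperiodic_cont : Continuous fun u => |f (1 / 2 + u) - c| + |f (1 / 2 - u) - c| := by
    fun_prop
  refine maxFunR_eq_of_integral_le_of_eq (r₀ := q) (fun r hr => ?_) (by linarith [hq.1]) ?_
  · rw [hfold]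
    exact hperiodic.intervalIntegral_le_mul_of_le_on_period one_pos
      (hperiodic_cont.intervalIntegrable _ _)
      (fun s hs => hprofile hs ▸ integral_tentProfile_le hc hs) hr.le
  · rw [hfold, hprofile ⟨by linarith [hq.1], by linarith [hq.2, hc.2]⟩,
      integral_tentProfile_sqrt hc]

end TriangleWave

/-- Value of the maximal function of `f - 1/n` at `1/2`, for the
`2`-periodic extension `f` of `|x|` and large `n`. -/
theorem maximal_function_shifted_at_half
    (f : ℝ → ℝ) (hf : Continuous f) (hper : ∀ t, f (t + 2) = f t)
    (hval : ∀ x ∈ Set.Icc (-1 : ℝ) 1, f x = |x|) :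
    ∀ᶠ n : ℕ in atTop,
      maxFunR (fun x => f x - 1 / n) (1 / 2) =
        1 - Real.sqrt (-(1 / (n : ℝ) ^ 2) + 1 / n + 1 / 4) := by
  filter_upwards [eventually_ge_atTop 2] with n hn
  have hn' : (2 : ℝ) ≤ n := by exact_mod_cast hn
  have hc : (1 / n : ℝ) ∈ Icc 0 (1 / 2) :=
    ⟨by positivity, by rw [div_le_div_iff₀ (by linarith) two_pos]; linarith⟩
  rw [maxFunR_triangleWave_sub_const_at_half hper hval hf hc]
  congr 2
  ring
end
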